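/- If T is a bounded operator on a complex Hilbert space H that is A-invertible in B_A(H) with A-inverse S, then the A-reduced minimum modulus satisfies γ_A(T) ≥ 1/‖S‖_A > 0. -/

import Mathlib

open Filter Topology ContinuousLinearMap

variable {H : Type*} [NormedAddCommGroup H] [InnerProductSpace ℂ H] [CompleteSpace H]

/-- The `A`-seminorm `‖x‖_A = ⟨Ax,x⟩^{1/2}`. -/
noncomputable def anorm (A : H →L[ℂ] H) (x : H) : ℝ :=
  Real.sqrt (inner ℂ (A x) x : ℂ).re

/-- `B_{A^{1/2}}(H)`: the `A`-bounded operators. -/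
def MemBAhalf (A T : H →L[ℂ] H) : Prop :=
  ∃ d > 0, ∀ ξ : H, anorm A (T ξ) ≤ d * anorm A ξ

/-- `B_A(H)`: operators admitting an `A`-adjoint. -/
def MemBA (A T : H →L[ℂ] H) : Prop :=
  Set.range (fun x => ContinuousLinearMap.adjoint T (A x)) ⊆ Set.range A

/-- A-invertibility in `B_{A^{1/2}}(H)`. -/
def AInvertibleHalf (A T : H →L[ℂ] H) : Prop :=
  ∃ S : H →L[ℂ] H, S ≠ 0 ∧ MemBAhalf A S ∧ A ∘L T ∘L S = A ∧ A ∘L S ∘L T = A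

/-- A-invertibility in `B_A(H)`. -/
def AInvertibleBA (A T : H →L[ℂ] H) : Prop :=
  ∃ S : H →L[ℂ] H, S ≠ 0 ∧ MemBA A S ∧ A ∘L T ∘L S = A ∧ A ∘L S ∘L T = A

/-- The `A`-approximate point spectrum. -/
def sigmaAapp (A T : H →L[ℂ] H) : Set ℂ :=
  {lam | ∃ x : ℕ → H, (∀ n, anorm A (x n) = 1) ∧
    Tendsto (fun n => anorm A (T (x n) - lam • x n)) atTop (nhds 0)}

/-- The `A`-spectrum. -/
def sigmaA (A T : H →L[ℂ] H) : Set ℂ :=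
  {lam | ¬ AInvertibleHalf A (lam • (1 : H →L[ℂ] H) - T)}

/-- The `A`-numerical range. -/
def WA (A T : H →L[ℂ] H) : Set ℂ :=
  {z | ∃ x : H, anorm A x = 1 ∧ z = (inner ℂ (A (T x)) x : ℂ)}

/-- The `A`-operator seminorm, sup over the closure of the range of `A`. -/
noncomputable def AopnormCl (A T : H →L[ℂ] H) : ℝ :=
  sSup {r | ∃ ξ ∈ closure (Set.range A), anorm A ξ ≤ 1 ∧ r = anorm A (T ξ)}

/-- The `A`-operator seminorm, sup over all vectors of `A`-seminorm at most one. -/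
noncomputable def Aopnorm (A T : H →L[ℂ] H) : ℝ :=
  sSup {r | ∃ ξ : H, anorm A ξ ≤ 1 ∧ r = anorm A (T ξ)}

/-- The `A`-numerical radius. -/
noncomputable def wA (A T : H →L[ℂ] H) : ℝ :=
  sSup {r | ∃ x : H, anorm A x = 1 ∧ r = ‖(inner ℂ (A (T x)) x : ℂ)‖}

/-- The `A`-reduced minimum modulus. -/
noncomputable def gammaA (A T : H →L[ℂ] H) : ℝ :=
  sInf {r | ∃ ξ : H, (∀ y : H, anorm A (T y) = 0 → (inner ℂ (A ξ) y : ℂ) = 0) ∧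
    anorm A ξ = 1 ∧ r = anorm A (T ξ)}

/-- closure of the range of `A` as a submodule. -/
noncomputable def rangeClosure (A : H →L[ℂ] H) : Submodule ℂ H :=
  (LinearMap.range (A : H →ₗ[ℂ] H)).topologicalClosure

noncomputable instance (A : H →L[ℂ] H) : CompleteSpace (rangeClosure A) :=
  (Submodule.isClosed_topologicalClosure _).completeSpace_coe

/-- orthogonal projection onto the closure of the range of `A`, as an operator on `H`. -/
noncomputable def Pcl (A : H →L[ℂ] H) : H →L[ℂ] H :=
  (rangeClosure A).subtypeL ∘L Submodule.orthogonalProjection (rangeClosure A)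

/-! Since `A S T = A`, Cauchy–Schwarz for the semi-inner product `⟪A ·, ·⟫` gives
`‖ξ‖_A² = ⟪A S T ξ, ξ⟫ ≤ ‖S T ξ‖_A ‖ξ‖_A`, hence `‖ξ‖_A ≤ ‖S T ξ‖_A ≤ ‖S‖_A ‖T ξ‖_A`.
The last step needs `S` to be `A`-bounded. By Douglas' lemma, `R(S* A) ⊆ R(A)` yields a bounded
`W` with `A W = S* A`; then `K = W S` is symmetric for `⟪A ·, ·⟫` and Reid's inequality gives
`‖S x‖_A² = ⟪A K x, x⟫ ≤ ‖K‖ ‖x‖_A²`. Finally, `‖T y‖_A = 0` forces `‖y‖_A = 0`, i.e. `A y = 0`,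
so the orthogonality constraint in `γ_A(T)` holds for every `ξ`. -/

/-- Douglas' factorization lemma; `W` is the reduced solution, with values in `(ker A)ᗮ`. -/
theorem ContinuousLinearMap.exists_comp_eq_of_range_le {𝕜 E F G : Type*} [RCLike 𝕜]
    [NormedAddCommGroup E] [InnerProductSpace 𝕜 E] [CompleteSpace E]
    [NormedAddCommGroup F] [NormedSpace 𝕜 F]
    [NormedAddCommGroup G] [NormedSpace 𝕜 G] [CompleteSpace G]
    (A : E →L[𝕜] F) (X : G →L[𝕜] F) (h : X.range ≤ A.range) :
    ∃ W : G →L[𝕜] E, A ∘L W = X := by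
  set K := A.kerᗮ
  have hK_inj : ∀ k ∈ K, A k = 0 → k = 0 := fun k hk hAk =>
    inner_self_eq_zero.1 (Submodule.inner_right_of_mem_orthogonal (LinearMap.mem_ker.2 hAk) hk)
  set A' : K →ₗ[𝕜] F := (A : E →ₗ[𝕜] F) ∘ₗ K.subtype
  have hA'_inj : Function.Injective A' := by
    rw [← LinearMap.ker_eq_bot, LinearMap.ker_eq_bot']
    exact fun k hk => Subtype.ext (hK_inj k k.2 hk)
  have hrange : X.range ≤ LinearMap.range A' := by
    refine h.trans ?_
    rintro _ ⟨z, rfl⟩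
    refine ⟨K.orthogonalProjectionOnto z, ?_⟩
    have : z - K.starProjection z ∈ A.ker := by
      have := K.sub_starProjection_mem_orthogonal z
      rwa [Submodule.orthogonal_orthogonal_eq_closure,
        A.isClosed_ker.submodule_topologicalClosure_eq] at this
    rw [LinearMap.mem_ker, map_sub, sub_eq_zero] at this
    exact this.symm
  set W₀ : G →ₗ[𝕜] E := K.subtype ∘ₗ (LinearEquiv.ofInjective A' hA'_inj).symm.toLinearMap ∘ₗ
    X.toLinearMap.codRestrict _ (fun g => hrange ⟨g, rfl⟩)
  have hAW₀ : ∀ g, A (W₀ g) = X g := fun g =>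
    congrArg Subtype.val
      ((LinearEquiv.ofInjective A' hA'_inj).apply_symm_apply ⟨X g, hrange ⟨g, rfl⟩⟩)
  have hW₀K : ∀ g, W₀ g ∈ K := fun g => Subtype.property _
  refine ⟨⟨W₀, W₀.continuous_of_seq_closed_graph fun u x y hu hWu => ?_⟩, ext hAW₀⟩
  have hAy : A y = X x := tendsto_nhds_unique ((A.continuous.tendsto y).comp hWu)
    (by simpa [Function.comp_def, hAW₀] using (X.continuous.tendsto x).comp hu)
  have hyK : y ∈ K :=
    (Submodule.isClosed_orthogonal _).mem_of_tendsto hWu (.of_forall fun n => hW₀K (u n))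
  exact sub_eq_zero.1 (hK_inj _ (sub_mem hyK (hW₀K x)) (by rw [map_sub, hAy, hAW₀, sub_self]))

theorem le_one_of_forall_pow_two_pow_le {t C : ℝ} (h : ∀ n : ℕ, t ^ 2 ^ n ≤ C) : t ≤ 1 := by
  by_contra! ht
  obtain ⟨n, hn⟩ := pow_unbounded_of_one_lt C ht
  have : t ^ n ≤ t ^ 2 ^ n := pow_le_pow_right₀ ht.le Nat.lt_two_pow_self.le
  linarith [h n]

namespace ContinuousLinearMap

variable {𝕜 E F : Type*} [RCLike 𝕜] [NormedAddCommGroup E] [NormedSpace 𝕜 E]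
  [NormedAddCommGroup F] [InnerProductSpace 𝕜 F] (B : E →L[𝕜] F) {K : E →L[𝕜] E}

local notation "⟪" x ", " y "⟫" => inner 𝕜 x y

theorem inner_pow_apply_symm (hK : ∀ x y, ⟪B (K x), B y⟫ = ⟪B x, B (K y)⟫) (n : ℕ) (x y : E) :
    ⟪B ((K ^ n) x), B y⟫ = ⟪B x, B ((K ^ n) y)⟫ := by
  induction n generalizing x y with
  | zero => rfl
  | succ n ih =>
    rw [pow_succ, mul_apply_eq_comp, ih, hK, ← mul_apply_eq_comp, ← pow_succ', pow_succ]

theorem sq_norm_apply_le_of_inner_symm (hK : ∀ x y, ⟪B (K x), B y⟫ = ⟪B x, B (K y)⟫) (x : E) :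
    ‖B (K x)‖ ^ 2 ≤ ‖B x‖ * ‖B (K (K x))‖ := by
  rw [← inner_self_eq_norm_sq (𝕜 := 𝕜), hK]
  exact re_inner_le_norm _ _

theorem sq_norm_pow_two_pow_apply_le (hK : ∀ x y, ⟪B (K x), B y⟫ = ⟪B x, B (K y)⟫) (n : ℕ)
    (x : E) : ‖B ((K ^ 2 ^ n) x)‖ ^ 2 ≤ ‖B x‖ * ‖B ((K ^ 2 ^ (n + 1)) x)‖ := by
  rw [pow_succ 2 n, mul_two, pow_add, mul_apply_eq_comp]
  exact sq_norm_apply_le_of_inner_symm B (inner_pow_apply_symm B hK _) x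

/-- Reid's inequality. Iterating `sq_norm_apply_le_of_inner_symm` along `K ^ 2 ^ n` gives
`(‖B (K x)‖ / ‖B x‖) ^ 2 ^ n ≤ ‖B (K ^ 2 ^ n x)‖ / ‖B x‖`, and the right side grows at most
like `‖K‖ ^ 2 ^ n`. -/
theorem norm_apply_le_of_inner_symm (hK : ∀ x y, ⟪B (K x), B y⟫ = ⟪B x, B (K y)⟫) (x : E) :
    ‖B (K x)‖ ≤ ‖K‖ * ‖B x‖ := by
  rcases (norm_nonneg (B x)).eq_or_lt with hb | hb
  · have := sq_norm_apply_le_of_inner_symm B hK x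
    rw [← hb, zero_mul] at this
    rw [← hb, mul_zero]
    nlinarith [norm_nonneg (B (K x))]
  rcases (norm_nonneg K).eq_or_lt with hk | hk
  · rw [(norm_eq_zero.1 hk.symm : K = 0)]
    simp
  set u : ℕ → ℝ := fun n => ‖B ((K ^ 2 ^ n) x)‖ / ‖B x‖
  have hu_sq : ∀ n, u n ^ 2 ≤ u (n + 1) := fun n => by
    simp only [u, div_pow, div_le_div_iff₀ (by positivity : (0:ℝ) < ‖B x‖ ^ 2) hb]
    nlinarith [sq_norm_pow_two_pow_apply_le B hK n x]
  have hu_ge : ∀ n, u 0 ^ 2 ^ n ≤ u n := fun n => by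
    induction n with
    | zero => simp
    | succ n ih =>
      calc u 0 ^ 2 ^ (n + 1) = (u 0 ^ 2 ^ n) ^ 2 := by rw [pow_succ, pow_mul]
        _ ≤ u n ^ 2 := pow_le_pow_left₀ (by positivity) ih 2
        _ ≤ u (n + 1) := hu_sq n
  have hu_le : ∀ n, u n ≤ ‖B‖ * ‖x‖ / ‖B x‖ * ‖K‖ ^ 2 ^ n := fun n => by
    rw [div_mul_eq_mul_div, div_le_div_iff_of_pos_right hb]
    calc ‖B ((K ^ 2 ^ n) x)‖ ≤ ‖B‖ * (‖K ^ 2 ^ n‖ * ‖x‖) :=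
          (B.le_opNorm _).trans (by gcongr; exact le_opNorm _ _)
      _ ≤ ‖B‖ * (‖K‖ ^ 2 ^ n * ‖x‖) := by gcongr; exact norm_pow_le' K (pow_pos two_pos n)
      _ = ‖B‖ * ‖x‖ * ‖K‖ ^ 2 ^ n := by ring
  have : u 0 / ‖K‖ ≤ 1 := le_one_of_forall_pow_two_pow_le fun n => by
    rw [div_pow, div_le_iff₀ (by positivity)]
    exact (hu_ge n).trans (hu_le n)
  rw [div_le_one hk] at this
  simpa [u, div_le_iff₀ hb] using this

end ContinuousLinearMap

omit [CompleteSpace H] in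
theorem anorm_nonneg (A : H →L[ℂ] H) (x : H) : 0 ≤ anorm A x := Real.sqrt_nonneg _

omit [CompleteSpace H] in
theorem coe_rangeClosure (A : H →L[ℂ] H) : (rangeClosure A : Set H) = closure (Set.range A) := by
  rw [rangeClosure, Submodule.topologicalClosure_coe, LinearMap.coe_range, coe_coe]

theorem Pcl_apply_mem (A : H →L[ℂ] H) (y : H) : Pcl A y ∈ rangeClosure A :=
  (Submodule.orthogonalProjectionOnto _ y).2

section

variable {A : H →L[ℂ] H}

theorem ContinuousLinearMap.IsPositive.inner_sqrt_apply_sqrt_apply (hA : A.IsPositive)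
    (x y : H) :
    inner ℂ (CFC.sqrt A x) (CFC.sqrt A y) = inner ℂ (A x) y := by
  have hB : adjoint (CFC.sqrt A) = CFC.sqrt A :=
    isSelfAdjoint_iff'.1 (IsSelfAdjoint.of_nonneg (CFC.sqrt_nonneg A))
  rw [← adjoint_inner_left, hB, ← mul_apply_eq_comp,
    CFC.sqrt_mul_sqrt_self A ((nonneg_iff_isPositive A).2 hA)]

theorem anorm_eq_norm_sqrt_apply (hA : A.IsPositive) (x : H) : anorm A x = ‖CFC.sqrt A x‖ := by
  rw [anorm, ← hA.inner_sqrt_apply_sqrt_apply, ← RCLike.re_eq_complex_re,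
    inner_self_eq_norm_sq, Real.sqrt_sq (norm_nonneg _)]

theorem anorm_ofReal_smul (hA : A.IsPositive) {r : ℝ} (hr : 0 ≤ r) (x : H) :
    anorm A ((r : ℂ) • x) = r * anorm A x := by
  rw [anorm_eq_norm_sqrt_apply hA, anorm_eq_norm_sqrt_apply hA, map_smul, norm_smul,
    Complex.norm_real, Real.norm_of_nonneg hr]

omit [CompleteSpace H] in
theorem anorm_eq_zero_of_apply_eq_zero {v : H} (hv : A v = 0) : anorm A v = 0 := by
  simp [anorm, hv]

theorem sqrt_apply_eq_zero_of_apply_eq_zero (hA : A.IsPositive) {v : H} (hv : A v = 0) :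
    CFC.sqrt A v = 0 := by
  rw [← norm_eq_zero, ← anorm_eq_norm_sqrt_apply hA, anorm_eq_zero_of_apply_eq_zero hv]

theorem anorm_add_of_apply_eq_zero (hA : A.IsPositive) (x : H) {v : H} (hv : A v = 0) :
    anorm A (x + v) = anorm A x := by
  rw [anorm_eq_norm_sqrt_apply hA, anorm_eq_norm_sqrt_apply hA, map_add,
    sqrt_apply_eq_zero_of_apply_eq_zero hA hv, add_zero]

theorem apply_eq_zero_of_anorm_eq_zero (hA : A.IsPositive) {x : H} (hx : anorm A x = 0) :
    A x = 0 := by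
  rw [anorm_eq_norm_sqrt_apply hA, norm_eq_zero] at hx
  rw [← CFC.sqrt_mul_sqrt_self A ((nonneg_iff_isPositive A).2 hA), mul_apply_eq_comp, hx,
    map_zero]

theorem exists_anorm_eq_one (hA : A.IsPositive) (hA0 : A ≠ 0) : ∃ ξ : H, anorm A ξ = 1 := by
  obtain ⟨x, hx⟩ : ∃ x, A x ≠ 0 := by
    by_contra! h
    exact hA0 (ext h)
  have hx' : anorm A x ≠ 0 := fun h => hx (apply_eq_zero_of_anorm_eq_zero hA h)
  refine ⟨(((anorm A x)⁻¹ : ℝ) : ℂ) • x, ?_⟩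
  rw [anorm_ofReal_smul hA (inv_nonneg.2 (anorm_nonneg A x)), inv_mul_cancel₀ hx']

theorem anorm_le_anorm_apply_of_comp_eq (hA : A.IsPositive) {X : H →L[ℂ] H} (hX : A ∘L X = A)
    (ξ : H) : anorm A ξ ≤ anorm A (X ξ) := by
  rw [anorm_eq_norm_sqrt_apply hA, anorm_eq_norm_sqrt_apply hA]
  have : ‖CFC.sqrt A ξ‖ ^ 2 ≤ ‖CFC.sqrt A (X ξ)‖ * ‖CFC.sqrt A ξ‖ := by
    rw [← inner_self_eq_norm_sq (𝕜 := ℂ), hA.inner_sqrt_apply_sqrt_apply,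
      ← DFunLike.congr_fun hX ξ, comp_apply, ← hA.inner_sqrt_apply_sqrt_apply]
    exact re_inner_le_norm _ _
  nlinarith [norm_nonneg (CFC.sqrt A ξ), norm_nonneg (CFC.sqrt A (X ξ))]

theorem MemBA.memBAhalf (hA : A.IsPositive) {S : H →L[ℂ] H} (hS : MemBA A S) :
    MemBAhalf A S := by
  obtain ⟨W, hW⟩ := A.exists_comp_eq_of_range_le (adjoint S ∘L A) fun _ ⟨x, hx⟩ => hS ⟨x, hx⟩
  set B := CFC.sqrt A
  set K := W ∘L S
  have hK_eq : ∀ x y, inner ℂ (B (K x)) (B y) = inner ℂ (B (S x)) (B (S y)) := fun x y => by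
    rw [hA.inner_sqrt_apply_sqrt_apply, hA.inner_sqrt_apply_sqrt_apply, comp_apply,
      ← comp_apply A W, hW, comp_apply, adjoint_inner_left]
  have hK : ∀ x y, inner ℂ (B (K x)) (B y) = inner ℂ (B x) (B (K y)) := fun x y => by
    rw [hK_eq, ← inner_conj_symm (B x), hK_eq, inner_conj_symm]
  have hBS : ∀ x, ‖B (S x)‖ ≤ √‖K‖ * ‖B x‖ := fun x => by
    rw [← Real.sqrt_sq (norm_nonneg (B x)), ← Real.sqrt_mul (norm_nonneg K)]
    refine Real.le_sqrt_of_sq_le ?_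
    calc ‖B (S x)‖ ^ 2 = RCLike.re (inner ℂ (B (K x)) (B x)) := by
          rw [hK_eq, inner_self_eq_norm_sq]
      _ ≤ ‖B (K x)‖ * ‖B x‖ := re_inner_le_norm _ _
      _ ≤ ‖K‖ * ‖B x‖ * ‖B x‖ := by gcongr; exact B.norm_apply_le_of_inner_symm hK x
      _ = ‖K‖ * ‖B x‖ ^ 2 := by ring
  refine ⟨√‖K‖ + 1, by positivity, fun x => ?_⟩
  rw [anorm_eq_norm_sqrt_apply hA, anorm_eq_norm_sqrt_apply hA]
  exact (hBS x).trans (by gcongr; linarith)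

theorem apply_sub_Pcl_apply (hA : IsSelfAdjoint A) (y : H) : A (y - Pcl A y) = 0 := by
  have : y - Pcl A y ∈ (rangeClosure A)ᗮ := Submodule.sub_starProjection_mem_orthogonal y
  rwa [rangeClosure, Submodule.orthogonal_closure, orthogonal_range, isSelfAdjoint_iff'.1 hA]
    at this

variable {S : H →L[ℂ] H}

theorem MemBAhalf.apply_apply_eq_zero (hA : A.IsPositive) (hS : MemBAhalf A S) {v : H}
    (hv : A v = 0) : A (S v) = 0 := by
  obtain ⟨d, -, hd⟩ := hS
  refine apply_eq_zero_of_anorm_eq_zero hA (le_antisymm ?_ (anorm_nonneg A _))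
  simpa [anorm_eq_zero_of_apply_eq_zero hv] using hd v

omit [CompleteSpace H] in
theorem MemBAhalf.bddAbove (hS : MemBAhalf A S) :
    BddAbove {r | ∃ ξ ∈ closure (Set.range A), anorm A ξ ≤ 1 ∧ r = anorm A (S ξ)} := by
  obtain ⟨d, hd, hdS⟩ := hS
  refine ⟨d, ?_⟩
  rintro _ ⟨ξ, -, hξ, rfl⟩
  simpa using (hdS ξ).trans (mul_le_of_le_one_right hd.le hξ)

theorem anorm_apply_le_AopnormCl_mul_of_mem (hA : A.IsPositive) (hS : MemBAhalf A S) {ξ : H}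
    (hξ : ξ ∈ rangeClosure A) : anorm A (S ξ) ≤ AopnormCl A S * anorm A ξ := by
  rcases (anorm_nonneg A ξ).eq_or_lt with h0 | hpos
  · obtain ⟨d, -, hd⟩ := hS
    simpa [← h0] using hd ξ
  have hinv : 0 ≤ (anorm A ξ)⁻¹ := inv_nonneg.2 hpos.le
  have hη : (((anorm A ξ)⁻¹ : ℝ) : ℂ) • ξ ∈ closure (Set.range A) :=
    coe_rangeClosure A ▸ (rangeClosure A).smul_mem _ hξ
  have hle := le_csSup hS.bddAbove
    ⟨_, hη, (anorm_ofReal_smul hA hinv ξ).trans (inv_mul_cancel₀ hpos.ne') |>.le, rfl⟩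
  rwa [map_smul, anorm_ofReal_smul hA hinv, inv_mul_le_iff₀ hpos, mul_comm] at hle

theorem anorm_apply_le_AopnormCl_mul (hA : A.IsPositive) (hS : MemBAhalf A S) (y : H) :
    anorm A (S y) ≤ AopnormCl A S * anorm A y := by
  have hv := apply_sub_Pcl_apply hA.isSelfAdjoint y
  calc anorm A (S y) = anorm A (S (Pcl A y) + S (y - Pcl A y)) := by
        rw [← map_add, add_sub_cancel]
    _ = anorm A (S (Pcl A y)) := anorm_add_of_apply_eq_zero hA _ (hS.apply_apply_eq_zero hA hv)
    _ ≤ AopnormCl A S * anorm A (Pcl A y) :=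
        anorm_apply_le_AopnormCl_mul_of_mem hA hS (Pcl_apply_mem A y)
    _ = AopnormCl A S * anorm A y := by rw [← anorm_add_of_apply_eq_zero hA _ hv, add_sub_cancel]

end

theorem stmt0_general (A T S : H →L[ℂ] H) (hA : A.IsPositive) (hA0 : A ≠ 0)
    (hS : MemBA A S)
    (h2 : A ∘L S ∘L T = A) :
    0 < 1 / AopnormCl A S ∧ 1 / AopnormCl A S ≤ gammaA A T := by
  have hbound : ∀ ξ, anorm A ξ ≤ AopnormCl A S * anorm A (T ξ) := fun ξ =>
    (anorm_le_anorm_apply_of_comp_eq hA h2 ξ).trans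
      (anorm_apply_le_AopnormCl_mul hA (hS.memBAhalf hA) (T ξ))
  obtain ⟨ξ₀, hξ₀⟩ := exists_anorm_eq_one hA hA0
  have hpos : 0 < AopnormCl A S :=
    pos_of_mul_pos_left (one_pos.trans_le (hξ₀ ▸ hbound ξ₀)) (anorm_nonneg A _)
  have hperp : ∀ ξ y, anorm A (T y) = 0 → inner ℂ (A ξ) y = 0 := fun ξ y hy => by
    have hy' : anorm A y = 0 := le_antisymm (by simpa [hy] using hbound y) (anorm_nonneg A y)
    rw [hA.inner_left_eq_inner_right, apply_eq_zero_of_anorm_eq_zero hA hy', inner_zero_right]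
  refine ⟨one_div_pos.2 hpos, le_csInf ⟨_, ξ₀, hperp ξ₀, hξ₀, rfl⟩ ?_⟩
  rintro _ ⟨ξ, -, hξ, rfl⟩
  rw [div_le_iff₀' hpos]
  exact hξ ▸ hbound ξ

/-- if `T ∈ B_A(H)` is `A`-invertible in `B_A(H)` with `A`-inverse `S`,
then `γ_A(T) ≥ 1/‖S‖_A > 0`. -/
theorem stmt0 (A T S : H →L[ℂ] H) (hA : A.IsPositive) (hA0 : A ≠ 0)
    (hT : MemBA A T) (hS : MemBA A S) (hS0 : S ≠ 0)
    (h1 : A ∘L T ∘L S = A) (h2 : A ∘L S ∘L T = A) :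
    0 < 1 / AopnormCl A S ∧ 1 / AopnormCl A S ≤ gammaA A T :=
  stmt0_general A T S hA hA0 hS h2
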